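/- arXiv:1503.03229 — 5 statements merged into one kernel-verified Lean document; each statement's English description precedes it below -/
import Mathlib

section
/- For a face F ∈ Δ^α of the form F = G^α for some face G ∈ Δ, the link of F in Δ^α equals the expansion of the link of G in Δ: link_{Δ^α}(G^α) = (link_Δ(G))^α. -/
open Finset

/-- An abstract simplicial complex on vertex type `V`: a downward closed
family of finite subsets of `V`. -/
structure AbstractComplex (V : Type*) where
  faces : Set (Finset V)
  down_closed : ∀ {s t : Finset V}, s ∈ faces → t ⊆ s → t ∈ faces

namespace AbstractComplex

variable {V : Type*}

/-- A facet is a maximal face. -/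
def IsFacet (Δ : AbstractComplex V) (s : Finset V) : Prop :=
  s ∈ Δ.faces ∧ ∀ t ∈ Δ.faces, s ⊆ t → s = t

/-- A complex is pure if all facets have the same cardinality. -/
def IsPure (Δ : AbstractComplex V) : Prop :=
  ∀ s t : Finset V, Δ.IsFacet s → Δ.IsFacet t → s.card = t.card

/-- The link of a (potential) face `F`. -/
def link [DecidableEq V] (Δ : AbstractComplex V) (F : Finset V) : AbstractComplex V where
  faces := {G | G ∩ F = ∅ ∧ G ∪ F ∈ Δ.faces}
  down_closed := by
    rintro s t ⟨h1, h2⟩ hts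
    refine ⟨subset_empty.mp ?_, Δ.down_closed h2 (union_subset_union hts subset_rfl)⟩
    exact h1 ▸ inter_subset_inter hts subset_rfl

/-- The faces of cardinality `q` (i.e. dimension `q - 1`). -/
abbrev Face (Δ : AbstractComplex V) (q : ℕ) := {s : Finset V // s ∈ Δ.faces ∧ s.card = q}

/-- The simplicial boundary map on reduced chains with coefficients in `K`,
from chains spanned by faces of cardinality `q+1` to those spanned by faces of
cardinality `q`. -/
noncomputable def boundary (K : Type*) [Field K] [LinearOrder V]
    (Δ : AbstractComplex V) (q : ℕ) :
    (Δ.Face (q + 1) →₀ K) →ₗ[K] (Δ.Face q →₀ K) :=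
  Finsupp.lsum K fun s => LinearMap.toSpanSingleton K _
    (∑ x ∈ s.1.attach,
      ((-1 : K) ^ (s.1.filter (fun y => y < x.1)).card) •
        Finsupp.single (⟨s.1.erase x.1,
          Δ.down_closed s.2.1 (erase_subset _ _), by
            rw [card_erase_of_mem x.2, s.2.2]; omega⟩ : Δ.Face q) (1 : K))

/-- `Δ.RHTriv K i` says that the `i`-th reduced simplicial homology of `Δ`
with coefficients in `K` vanishes. -/
def RHTriv (K : Type*) [Field K] [LinearOrder V] (Δ : AbstractComplex V) : ℤ → Prop
  | Int.ofNat i =>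
      LinearMap.ker (Δ.boundary K i) ≤ LinearMap.range (Δ.boundary K (i + 1))
  | Int.negSucc 0 => ⊤ ≤ LinearMap.range (Δ.boundary K 0)
  | Int.negSucc (_ + 1) => True

/-- `Δ.dimLT i` means `i < dim Δ`. -/
def dimLT (Δ : AbstractComplex V) (i : ℤ) : Prop :=
  ∃ s ∈ Δ.faces, i + 2 ≤ (s.card : ℤ)

/-- Cohen–Macaulayness over `K`, via Reisner's criterion. -/
def IsCM (K : Type*) [Field K] [LinearOrder V] (Δ : AbstractComplex V) : Prop :=
  ∀ F ∈ Δ.faces, ∀ i : ℤ, (Δ.link F).dimLT i → (Δ.link F).RHTriv K i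

/-- `CM_t`: pure, and the link of every face of cardinality at least `t`
is Cohen–Macaulay. -/
def IsCMt (K : Type*) [Field K] [LinearOrder V] (t : ℕ) (Δ : AbstractComplex V) : Prop :=
  Δ.IsPure ∧ ∀ F ∈ Δ.faces, t ≤ F.card → IsCM K (Δ.link F)

/-- Buchsbaum-ness: pure and the reduced homology of the link of every nonempty
face vanishes below its dimension. -/
def IsBuchsbaum (K : Type*) [Field K] [LinearOrder V] (Δ : AbstractComplex V) : Prop :=
  Δ.IsPure ∧ ∀ G ∈ Δ.faces, G ≠ ∅ →
    ∀ i : ℤ, (Δ.link G).dimLT i → (Δ.link G).RHTriv K i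

end AbstractComplex

/-- The expansion `F^α` of a finite vertex set. -/
def expandSet {V : Type*} (α : V → ℕ) (F : Finset V) : Finset (Σ i, Fin (α i)) :=
  F.sigma fun _ => Finset.univ

namespace AbstractComplex

/-- The expansion `Δ^α` of a simplicial complex: the complex generated by the
expansions of the facets of `Δ`. -/
def expand {V : Type*} (Δ : AbstractComplex V) (α : V → ℕ) :
    AbstractComplex (Σ i, Fin (α i)) where
  faces := {σ | ∃ F, Δ.IsFacet F ∧ σ ⊆ expandSet α F}
  down_closed := fun ⟨F, hF, hsub⟩ hts => ⟨F, hF, hts.trans hsub⟩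

end AbstractComplex

/-- A linear order on the expanded vertex set (lexicographic). -/
noncomputable instance sigmaFinLinearOrder {V : Type*} [LinearOrder V] {α : V → ℕ} :
    LinearOrder (Σ i, Fin (α i)) :=
  LinearOrder.lift' (toLex : (Σ i, Fin (α i)) → Σₗ i, Fin (α i)) toLex.injective

/-!
A set `σ` of expanded vertices is a face of `Δ^α` exactly when its shadow `σ.image Sigma.fst`
is a face of `Δ`, so both sides of the theorem are conditions on shadows. Since every vertex has
at least one copy, the shadow of `σ ∪ G^α` is `shadow σ ∪ G`, and `σ` misses `G^α` iff its shadow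
misses `G`; this is exactly the condition for the shadow to lie in `link_Δ(G)`.
-/

section ExpandSet

variable {V : Type*} {α : V → ℕ}

@[simp]
lemma mem_expandSet {s : Finset V} {x : Σ i, Fin (α i)} : x ∈ expandSet α s ↔ x.1 ∈ s := by
  simp [expandSet]

lemma subset_expandSet_iff [DecidableEq V] {σ : Finset (Σ i, Fin (α i))} {s : Finset V} :
    σ ⊆ expandSet α s ↔ σ.image Sigma.fst ⊆ s := by
  rw [image_subset_iff]
  simp only [subset_iff, mem_expandSet]

lemma inter_expandSet_eq_empty_iff [DecidableEq V] {σ : Finset (Σ i, Fin (α i))}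
    {s : Finset V} : σ ∩ expandSet α s = ∅ ↔ σ.image Sigma.fst ∩ s = ∅ := by
  simp only [← disjoint_iff_inter_eq_empty, disjoint_left, mem_expandSet, forall_mem_image]

lemma image_fst_expandSet [DecidableEq V] (hα : ∀ i, 1 ≤ α i) (s : Finset V) :
    (expandSet α s).image Sigma.fst = s := by
  ext i
  simpa using fun _ : i ∈ s => Fin.pos_iff_nonempty.mp (hα i)

end ExpandSet

namespace AbstractComplex

variable {V : Type*}

lemma exists_isFacet_superset [Finite V] (Δ : AbstractComplex V) {s : Finset V}
    (hs : s ∈ Δ.faces) : ∃ F, Δ.IsFacet F ∧ s ⊆ F := by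
  obtain ⟨F, hsF, hmax⟩ := Finite.exists_le_maximal (p := (· ∈ Δ.faces)) hs
  exact ⟨F, ⟨hmax.prop, fun t ht hFt => le_antisymm hFt (hmax.le_of_ge ht hFt)⟩, hsF⟩

lemma mem_expand_faces_iff [Finite V] [DecidableEq V] (Δ : AbstractComplex V) {α : V → ℕ}
    {σ : Finset (Σ i, Fin (α i))} :
    σ ∈ (Δ.expand α).faces ↔ σ.image Sigma.fst ∈ Δ.faces := by
  constructor
  · rintro ⟨F, hF, hσF⟩
    exact Δ.down_closed hF.1 (subset_expandSet_iff.mp hσF)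
  · intro hσ
    obtain ⟨F, hF, hσF⟩ := Δ.exists_isFacet_superset hσ
    exact ⟨F, hF, subset_expandSet_iff.mpr hσF⟩

end AbstractComplex

theorem link_expand_general {V : Type*} [Fintype V] [DecidableEq V] (Δ : AbstractComplex V)
    (α : V → ℕ) (hα : ∀ i, 1 ≤ α i) (G : Finset V) :
    ((Δ.expand α).link (expandSet α G)).faces = ((Δ.link G).expand α).faces := by
  ext σ
  change _ ∧ _ ↔ σ ∈ ((Δ.link G).expand α).faces
  rw [Δ.mem_expand_faces_iff, (Δ.link G).mem_expand_faces_iff, image_union,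
    image_fst_expandSet hα, inter_expandSet_eq_empty_iff]
  rfl

/-- `link_{Δ^α}(G^α) = (link_Δ(G))^α` for a face `G ∈ Δ`. -/
theorem link_expand {V : Type*} [Fintype V] [DecidableEq V] (Δ : AbstractComplex V)
    (α : V → ℕ) (hα : ∀ i, 1 ≤ α i) (G : Finset V) (hG : G ∈ Δ.faces) :
    ((Δ.expand α).link (expandSet α G)).faces = ((Δ.link G).expand α).faces :=
  link_expand_general Δ α hα G
end

section
/- If F is a face of Δ^α that is not of the form G^α for any face G of Δ, then the link of F in Δ^α is a join: link_{Δ^α}(F) = ⟨π(F)^α \ F⟩ ∗ link_{Δ^α}(π(F)^α), where π is the projection x_{ij} ↦ x_i; in particular link_{Δ^α}(F) is a cone. -/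
open Finset

/-- if `F ∈ Δ^α` is not of the form `G^α`, then
`link_{Δ^α}(F) = ⟨π(F)^α \ F⟩ ∗ link_{Δ^α}(π(F)^α)`; in particular it is a cone. -/
theorem link_expand_join {V : Type*} [Fintype V] [DecidableEq V] (Δ : AbstractComplex V)
    (α : V → ℕ) (hα : ∀ i, 1 ≤ α i) (F : Finset (Σ i, Fin (α i)))
    (hF : F ∈ (Δ.expand α).faces) (hnot : ¬ ∃ G ∈ Δ.faces, F = expandSet α G) :
    (((Δ.expand α).link F).faces =
      {τ | ∃ σ τ₂ : Finset (Σ i, Fin (α i)),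
        σ ⊆ expandSet α (F.image Sigma.fst) \ F ∧
        τ₂ ∈ ((Δ.expand α).link (expandSet α (F.image Sigma.fst))).faces ∧
        τ = σ ∪ τ₂}) ∧
    ∃ v, ∀ τ ∈ ((Δ.expand α).link F).faces, insert v τ ∈ ((Δ.expand α).link F).faces := by
  classical
  set P := expandSet α (F.image Sigma.fst) with hPdef
  have hFP : F ⊆ P := by
    intro x hx
    simp only [hPdef, expandSet, Finset.mem_sigma, Finset.mem_univ, and_true]
    exact Finset.mem_image_of_mem Sigma.fst hx
  obtain ⟨H, hHf, hFH⟩ := hF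
  have hπ : F.image Sigma.fst ∈ Δ.faces := by
    apply Δ.down_closed hHf.1
    intro i hi
    obtain ⟨x, hx, rfl⟩ := Finset.mem_image.mp hi
    exact (Finset.mem_sigma.mp (hFH hx)).1
  have hFne : F ≠ P := fun h => hnot ⟨_, hπ, h⟩
  -- P is contained in any facet-expansion containing F
  have hPH : ∀ {H'}, F ⊆ expandSet α H' → P ⊆ expandSet α H' := by
    intro H' hsub x hx
    rw [hPdef] at hx
    simp only [expandSet, Finset.mem_sigma, Finset.mem_univ, and_true] at hx ⊢
    obtain ⟨y, hy, hy1⟩ := Finset.mem_image.mp hx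
    have := (Finset.mem_sigma.mp (hsub hy)).1
    rwa [hy1] at this
  obtain ⟨v, hvP, hvF⟩ : ∃ v, v ∈ P ∧ v ∉ F := by
    by_contra h
    push_neg at h
    exact hFne (Finset.Subset.antisymm hFP h)
  constructor
  · ext τ
    simp only [AbstractComplex.link, AbstractComplex.expand, Set.mem_setOf_eq]
    constructor
    · rintro ⟨hd, H', hH', hsub⟩
      refine ⟨τ ∩ P, τ \ P, ?_, ⟨?_, H', hH', ?_⟩, ?_⟩
      · intro x hx
        rw [Finset.mem_inter] at hx
        rw [Finset.mem_sdiff]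
        refine ⟨hx.2, fun hxF => ?_⟩
        have : x ∈ τ ∩ F := Finset.mem_inter.mpr ⟨hx.1, hxF⟩
        simp [hd] at this
      · ext x
        simp only [Finset.mem_inter, Finset.mem_sdiff, Finset.notMem_empty, iff_false]
        tauto
      · intro x hx
        rw [Finset.mem_union] at hx
        rcases hx with hx | hx
        · exact hsub (Finset.mem_union_left _ (Finset.mem_sdiff.mp hx).1)
        · exact hPH (fun y hy => hsub (Finset.mem_union_right _ hy)) hx
      · ext x
        simp only [Finset.mem_union, Finset.mem_inter, Finset.mem_sdiff]
        tauto
    · rintro ⟨σ, τ₂, hσ, ⟨hd2, H', hH', hsub2⟩, rfl⟩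
      have hσdis : ∀ x ∈ σ, x ∉ F := fun x hx hxF =>
        (Finset.mem_sdiff.mp (hσ hx)).2 hxF
      have hτ₂dis : ∀ x ∈ τ₂, x ∉ P := by
        intro x hx hxP
        have : x ∈ τ₂ ∩ P := Finset.mem_inter.mpr ⟨hx, hxP⟩
        simp [hd2] at this
      refine ⟨?_, H', hH', ?_⟩
      · ext x
        simp only [Finset.mem_inter, Finset.mem_union, Finset.notMem_empty, iff_false,
          not_and]
        rintro (hx | hx)
        · exact hσdis x hx
        · exact fun hxF => hτ₂dis x hx (hFP hxF)
      · intro x hx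
        simp only [Finset.mem_union] at hx
        rcases hx with (hx | hx) | hx
        · exact hsub2 (Finset.mem_union_right _ (Finset.mem_sdiff.mp (hσ hx)).1)
        · exact hsub2 (Finset.mem_union_left _ hx)
        · exact hsub2 (Finset.mem_union_right _ (hFP hx))
  · refine ⟨v, fun τ hτ => ?_⟩
    obtain ⟨hd, H', hH', hsub⟩ := hτ
    have hvH' : v ∈ expandSet α H' :=
      hPH (fun y hy => hsub (Finset.mem_union_right _ hy)) hvP
    refine ⟨?_, H', hH', ?_⟩
    · ext x
      simp only [Finset.mem_inter, Finset.mem_insert, Finset.notMem_empty, iff_false,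
        not_and]
      rintro (rfl | hx)
      · exact hvF
      · intro hxF
        have : x ∈ τ ∩ F := Finset.mem_inter.mpr ⟨hx, hxF⟩
        simp [hd] at this
    · intro x hx
      rw [Finset.mem_union, Finset.mem_insert] at hx
      rcases hx with (rfl | hx) | hx
      · exact hvH'
      · exact hsub (Finset.mem_union_left _ hx)
      · exact hsub (Finset.mem_union_right _ hx)
end

section
/- Suppose α = (k_1,…,k_n) ∈ ℕ^n (all k_i ≥ 1) satisfies: for all facets F, G of Δ, if x_i ∈ F \ G and x_j ∈ G \ F then k_i = k_j. Then Δ is pure if and only if Δ^α is pure. -/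
open Finset

/-- under condition (†), `Δ` is pure iff `Δ^α` is pure. -/
theorem pure_iff_expand_pure {V : Type*} [Fintype V] (Δ : AbstractComplex V)
    (α : V → ℕ) (hα : ∀ i, 1 ≤ α i)
    (hdag : ∀ F G : Finset V, Δ.IsFacet F → Δ.IsFacet G →
      ∀ i ∈ F, i ∉ G → ∀ j ∈ G, j ∉ F → α i = α j) :
    Δ.IsPure ↔ (Δ.expand α).IsPure := by
  classical
  have hcard : ∀ F : Finset V, (expandSet α F).card = ∑ i ∈ F, α i := by
    intro F; simp [expandSet]
  have hmono : ∀ F G : Finset V, expandSet α F ⊆ expandSet α G → F ⊆ G := by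
    intro F G h i hi
    have h1 : (⟨i, ⟨0, hα i⟩⟩ : Σ i, Fin (α i)) ∈ expandSet α F := by
      simp [expandSet, hi]
    have h2 := h h1
    simpa [expandSet] using h2
  have hfacet : ∀ F, Δ.IsFacet F → (Δ.expand α).IsFacet (expandSet α F) := by
    intro F hF
    refine ⟨⟨F, hF, subset_rfl⟩, ?_⟩
    rintro σ ⟨G, hG, hσG⟩ hFσ
    have hFG : F ⊆ G := hmono F G (hFσ.trans hσG)
    have hh : F = G := hF.2 G hG.1 hFG
    subst hh
    exact subset_antisymm hFσ hσG
  have hfacet' : ∀ σ, (Δ.expand α).IsFacet σ → ∃ F, Δ.IsFacet F ∧ σ = expandSet α F := by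
    intro σ hσ
    obtain ⟨F, hF, hσF⟩ := hσ.1
    exact ⟨F, hF, hσ.2 _ ⟨F, hF, subset_rfl⟩ hσF⟩
  have key : ∀ F G : Finset V, Δ.IsFacet F → Δ.IsFacet G →
      (F.card = G.card ↔ ∑ i ∈ F, α i = ∑ i ∈ G, α i) := by
    intro F G hF hG
    by_cases hFG : F = G
    · subst hFG; simp
    have hne1 : (F \ G).Nonempty := by
      rw [Finset.sdiff_nonempty]
      intro h
      exact hFG (hF.2 G hG.1 h)
    have hne2 : (G \ F).Nonempty := by
      rw [Finset.sdiff_nonempty]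
      intro h
      exact hFG (hG.2 F hF.1 h).symm
    obtain ⟨j, hj⟩ := hne2
    obtain ⟨i0, hi0⟩ := hne1
    have hc1 : ∀ i ∈ F \ G, α i = α j := fun i hi =>
      hdag F G hF hG i (Finset.mem_sdiff.mp hi).1 (Finset.mem_sdiff.mp hi).2
        j (Finset.mem_sdiff.mp hj).1 (Finset.mem_sdiff.mp hj).2
    have hc2 : ∀ k ∈ G \ F, α k = α j := fun k hk => by
      rw [← hdag F G hF hG i0 (Finset.mem_sdiff.mp hi0).1 (Finset.mem_sdiff.mp hi0).2
        k (Finset.mem_sdiff.mp hk).1 (Finset.mem_sdiff.mp hk).2, hc1 i0 hi0]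
    have hsum1 : ∑ i ∈ F \ G, α i = (F \ G).card * α j := by
      rw [Finset.sum_congr rfl hc1, Finset.sum_const, smul_eq_mul]
    have hsum2 : ∑ i ∈ G \ F, α i = (G \ F).card * α j := by
      rw [Finset.sum_congr rfl hc2, Finset.sum_const, smul_eq_mul]
    have hF_split : ∑ i ∈ F, α i = ∑ i ∈ F \ G, α i + ∑ i ∈ F ∩ G, α i := by
      rw [← Finset.sum_union (Finset.sdiff_disjoint.mono_right Finset.inter_subset_right),
        Finset.sdiff_union_inter]
    have hG_split : ∑ i ∈ G, α i = ∑ i ∈ G \ F, α i + ∑ i ∈ G ∩ F, α i := by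
      rw [← Finset.sum_union (Finset.sdiff_disjoint.mono_right Finset.inter_subset_right),
        Finset.sdiff_union_inter]
    have hcF : (F \ G).card + (F ∩ G).card = F.card := by
      rw [← Finset.card_union_of_disjoint
        (Finset.sdiff_disjoint.mono_right Finset.inter_subset_right),
        Finset.sdiff_union_inter]
    have hcG : (G \ F).card + (G ∩ F).card = G.card := by
      rw [← Finset.card_union_of_disjoint
        (Finset.sdiff_disjoint.mono_right Finset.inter_subset_right),
        Finset.sdiff_union_inter]
    have hIC : (F ∩ G).card = (G ∩ F).card := by rw [Finset.inter_comm]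
    have hIS : ∑ i ∈ F ∩ G, α i = ∑ i ∈ G ∩ F, α i := by rw [Finset.inter_comm]
    have hj1 : 1 ≤ α j := hα j
    constructor
    · intro h
      have hd : (F \ G).card = (G \ F).card := by omega
      rw [hF_split, hG_split, hsum1, hsum2, hd, hIS]
    · intro h
      rw [hF_split, hG_split, hsum1, hsum2, hIS] at h
      have hmm : (F \ G).card * α j = (G \ F).card * α j := by omega
      have hcd : (F \ G).card = (G \ F).card := Nat.eq_of_mul_eq_mul_right hj1 hmm
      omega
  constructor
  · intro hP σ τ hσ hτ
    obtain ⟨F, hF, rfl⟩ := hfacet' σ hσ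
    obtain ⟨G, hG, rfl⟩ := hfacet' τ hτ
    rw [hcard, hcard]
    exact (key F G hF hG).mp (hP F G hF hG)
  · intro hP F G hF hG
    have h := hP _ _ (hfacet F hF) (hfacet G hG)
    rw [hcard, hcard] at h
    exact (key F G hF hG).mpr h
end

section
/- For a nonnegative integer t ≥ 1 and a nonempty simplicial complex Δ: Δ is CM_t if and only if Δ is pure and link_Δ({v}) is CM_{t−1} for every vertex v of Δ. -/
open Finset

/-!
For a vertex `v ∉ G`, the link of `G` in `link_Δ {v}` is `link_Δ (G ∪ {v})`, and `G ↦ G ∪ {v}`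
matches the faces of `link_Δ {v}` of size at least `t - 1` with the faces of `Δ` of size at least
`t` containing `v`. Purity passes to links because
the facets of `link_Δ F` are the facets of `Δ` through `F` with `F` removed.
-/

namespace AbstractComplex

variable {V : Type*}

theorem ext {Δ₁ Δ₂ : AbstractComplex V} (h : Δ₁.faces = Δ₂.faces) : Δ₁ = Δ₂ := by
  cases Δ₁; cases Δ₂; simp_all

section Link

variable [DecidableEq V] {Δ : AbstractComplex V}

theorem link_link (Δ : AbstractComplex V) {F G : Finset V} (hGF : G ∩ F = ∅) :
    (Δ.link F).link G = Δ.link (G ∪ F) := by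
  apply ext
  ext H
  show H ∩ G = ∅ ∧ (H ∪ G) ∩ F = ∅ ∧ (H ∪ G) ∪ F ∈ Δ.faces ↔
    H ∩ (G ∪ F) = ∅ ∧ H ∪ (G ∪ F) ∈ Δ.faces
  rw [union_inter_distrib_right, inter_union_distrib_left, hGF, union_assoc]
  simp only [union_empty, union_eq_empty]
  tauto

theorem link_singleton_link (Δ : AbstractComplex V) {v : V} {G : Finset V} (hv : v ∉ G) :
    (Δ.link {v}).link G = Δ.link (insert v G) := by
  rw [link_link Δ (inter_singleton_of_notMem hv), union_comm, ← insert_eq]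

theorem mem_link_singleton_iff {v : V} {G : Finset V} :
    G ∈ (Δ.link {v}).faces ↔ v ∉ G ∧ insert v G ∈ Δ.faces := by
  show G ∩ {v} = ∅ ∧ G ∪ {v} ∈ Δ.faces ↔ _
  rw [← disjoint_iff_inter_eq_empty, disjoint_singleton_right, union_comm, ← insert_eq]

theorem IsFacet.union_of_link {F G : Finset V} (h : (Δ.link F).IsFacet G) :
    Δ.IsFacet (G ∪ F) := by
  obtain ⟨⟨hGF, hGuF⟩, hmax⟩ := h
  refine ⟨hGuF, fun H hH hsub => ?_⟩
  have hFH : F ⊆ H := (union_subset_iff.mp hsub).2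
  have hHF : H \ F ∈ (Δ.link F).faces :=
    ⟨sdiff_inter_self F H, by rwa [sdiff_union_of_subset hFH]⟩
  have hGHF : G ⊆ H \ F :=
    subset_sdiff.mpr ⟨(union_subset_iff.mp hsub).1, disjoint_iff_inter_eq_empty.mpr hGF⟩
  rw [hmax (H \ F) hHF hGHF, sdiff_union_of_subset hFH]

theorem IsPure.link (hpure : Δ.IsPure) (F : Finset V) : (Δ.link F).IsPure := by
  intro s u hs hu
  have hc := hpure _ _ hs.union_of_link hu.union_of_link
  rw [card_union_of_disjoint (disjoint_iff_inter_eq_empty.mpr hs.1.1),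
    card_union_of_disjoint (disjoint_iff_inter_eq_empty.mpr hu.1.1)] at hc
  omega

end Link

variable (K : Type*) [Field K] [LinearOrder V] {Δ : AbstractComplex V} {t : ℕ}

theorem IsCMt.link_singleton (h : Δ.IsCMt K t) (v : V) : (Δ.link {v}).IsCMt K (t - 1) := by
  refine ⟨h.1.link {v}, fun G hG hcard => ?_⟩
  obtain ⟨hvG, hvGΔ⟩ := mem_link_singleton_iff.mp hG
  rw [link_singleton_link Δ hvG]
  exact h.2 _ hvGΔ (by rw [card_insert_of_notMem hvG]; omega)

theorem IsCMt.of_link_singleton (ht : 1 ≤ t) (hpure : Δ.IsPure)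
    (hlink : ∀ v : V, {v} ∈ Δ.faces → (Δ.link {v}).IsCMt K (t - 1)) : Δ.IsCMt K t := by
  refine ⟨hpure, fun F hF hcard => ?_⟩
  obtain ⟨v, hv⟩ : F.Nonempty := card_pos.mp (by omega)
  have hvΔ : {v} ∈ Δ.faces := Δ.down_closed hF (singleton_subset_iff.mpr hv)
  have hvF : v ∉ F.erase v := notMem_erase v F
  have hFv : F.erase v ∈ (Δ.link {v}).faces :=
    mem_link_singleton_iff.mpr ⟨hvF, by rwa [insert_erase hv]⟩
  have hCM := (hlink v hvΔ).2 _ hFv (by rw [card_erase_of_mem hv]; omega)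
  rwa [link_singleton_link Δ hvF, insert_erase hv] at hCM

end AbstractComplex

theorem cmt_iff_link_cmt_general (K : Type*) [Field K] {V : Type*} [LinearOrder V]
    (Δ : AbstractComplex V) (t : ℕ) (ht : 1 ≤ t) :
    Δ.IsCMt K t ↔
      Δ.IsPure ∧ ∀ v : V, {v} ∈ Δ.faces → (Δ.link {v}).IsCMt K (t - 1) :=
  ⟨fun h => ⟨h.1, fun v _ => h.link_singleton K v⟩,
    fun ⟨hpure, hlink⟩ => AbstractComplex.IsCMt.of_link_singleton K ht hpure hlink⟩

/-- for `t ≥ 1` and a nonempty complex `Δ`: `Δ` is `CM_t` iff `Δ` is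
pure and the link of every vertex is `CM_{t-1}`. -/
theorem cmt_iff_link_cmt (K : Type*) [Field K] {V : Type*} [Fintype V] [LinearOrder V]
    (Δ : AbstractComplex V) (t : ℕ) (ht : 1 ≤ t) (hne : Δ.faces.Nonempty) :
    Δ.IsCMt K t ↔
      Δ.IsPure ∧ ∀ v : V, {v} ∈ Δ.faces → (Δ.link {v}).IsCMt K (t - 1) :=
  cmt_iff_link_cmt_general K Δ t ht
end

section
/- Let I ⊂ K[x_1,…,x_n] be a monomial ideal and α ∈ ℕ^n with positive entries. Then the minimal monomial generating set of the expansion I^α equals the expansion of the minimal generating set: G(I^α) = G(I)^α. -/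
open Finset

/-- `I` is a monomial ideal: generated by a set of monomials. -/
def IsMonomialIdeal {K : Type*} [Field K] {σ : Type*} (I : Ideal (MvPolynomial σ K)) : Prop :=
  ∃ M : Set (σ →₀ ℕ), I = Ideal.span ((fun m => MvPolynomial.monomial m (1 : K)) '' M)

/-- The minimal monomial generators `G(I)` of a monomial ideal, recorded by their
exponent vectors: monomials in `I` that are minimal with respect to divisibility. -/
def minGens {K : Type*} [Field K] {σ : Type*} (I : Ideal (MvPolynomial σ K)) : Set (σ →₀ ℕ) :=
  {m | MvPolynomial.monomial m (1 : K) ∈ I ∧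
    ∀ m', MvPolynomial.monomial m' (1 : K) ∈ I → m' ≤ m → m' = m}

/-- The prime ideal `P_j = (x_{j1}, …, x_{jk_j})` in the expanded polynomial ring. -/
noncomputable def varIdeal {K : Type*} [Field K] {V : Type*} (α : V → ℕ) (j : V) :
    Ideal (MvPolynomial (Σ i, Fin (α i)) K) :=
  Ideal.span (Set.range fun r : Fin (α j) => MvPolynomial.X ⟨j, r⟩)

/-- The Bayati–Herzog expansion `I^α = Σ_{u ∈ G(I)} P_1^{ν_1(u)} ⋯ P_n^{ν_n(u)}`
of a monomial ideal. -/
noncomputable def expandIdeal {K : Type*} [Field K] {V : Type*} [Fintype V] (α : V → ℕ)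
    (I : Ideal (MvPolynomial V K)) : Ideal (MvPolynomial (Σ i, Fin (α i)) K) :=
  ⨆ m ∈ minGens I, ∏ j : V, (varIdeal α j) ^ (m j)

/-!
Write `D b = b.mapDomain Sigma.fst` for the exponent vector obtained from `b` by substituting
`x_j` for every `x_{jr}`. A monomial `x^b` lies in `I^α` iff `D b ≥ u` for some `u ∈ G(I)`: the
substitution maps `P_1^{u_1} ⋯ P_n^{u_n}` into `(x^u)`, and conversely
`x^b ∈ P_1^{(D b)_1} ⋯ P_n^{(D b)_n}`. Since every `u ≤ D b` lifts to some `s ≤ b` with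
`D s = u`, and `D` is strictly monotone, `b` is a minimal generator of `I^α` iff `D b ∈ G(I)`;
for `I = (x^u)` this says `u^α = {b | D b = u}`.
-/

theorem Multiset.exists_le_map_eq_of_le_map {α β : Type*} {f : α → β} {m : Multiset β}
    {b : Multiset α} (h : m ≤ b.map f) : ∃ s ≤ b, s.map f = m := by
  induction b using Multiset.induction generalizing m with
  | empty => exact ⟨0, le_rfl, (Multiset.le_zero.1 h).symm⟩
  | cons a b ih =>
    rw [Multiset.map_cons] at h
    by_cases ha : f a ∈ m
    · obtain ⟨m, rfl⟩ := Multiset.exists_cons_of_mem ha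
      obtain ⟨s, hs, rfl⟩ := ih ((Multiset.cons_le_cons_iff _).1 h)
      exact ⟨a ::ₘ s, Multiset.cons_le_cons a hs, Multiset.map_cons f a s⟩
    · obtain ⟨s, hs, rfl⟩ := ih ((Multiset.le_cons_of_notMem ha).1 h)
      exact ⟨s, hs.trans (Multiset.le_cons_self b a), rfl⟩

namespace Finsupp

variable {α β : Type*} {f : α → β}

theorem eq_of_le_of_mapDomain_eq {s b : α →₀ ℕ} (h : s ≤ b)
    (hf : s.mapDomain f = b.mapDomain f) : s = b := by
  obtain ⟨c, rfl⟩ := exists_add_of_le h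
  rw [mapDomain_add, left_eq_add] at hf
  rw [(degree_eq_zero_iff c).1 (by rw [← degree_mapDomain f, hf, map_zero]), add_zero]

theorem exists_le_mapDomain_eq_of_le_mapDomain {m : β →₀ ℕ} {b : α →₀ ℕ}
    (h : m ≤ b.mapDomain f) : ∃ s ≤ b, s.mapDomain f = m := by
  classical
  rw [← orderIsoMultiset.le_iff_le, coe_orderIsoMultiset, ← toMultiset_map] at h
  obtain ⟨S, hS, hSm⟩ := Multiset.exists_le_map_eq_of_le_map h
  refine ⟨orderIsoMultiset.symm S, ?_, orderIsoMultiset.injective ?_⟩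
  · rwa [← orderIsoMultiset.le_iff_le, OrderIso.apply_symm_apply, coe_orderIsoMultiset]
  · simp [← toMultiset_map, ← hSm]

end Finsupp

open MvPolynomial

theorem monomial_mem_span_monomial_iff {R σ : Type*} [CommSemiring R] [Nontrivial R]
    {m u : σ →₀ ℕ} : monomial u (1 : R) ∈ Ideal.span {monomial m (1 : R)} ↔ m ≤ u := by
  simp [Ideal.mem_span_singleton, monomial_dvd_monomial]

theorem minGens_span_monomial {K σ : Type*} [Field K] (m : σ →₀ ℕ) :
    minGens (Ideal.span {monomial m (1 : K)}) = {m} := by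
  ext u
  simp only [minGens, Set.mem_ofPred_eq, Set.mem_singleton_iff, monomial_mem_span_monomial_iff]
  exact ⟨fun ⟨hmu, hmin⟩ => (hmin m le_rfl hmu).symm,
    by rintro rfl; exact ⟨le_rfl, fun _ h h' => le_antisymm h' h⟩⟩

section Expansion

variable {K V : Type*} [Field K] {α : V → ℕ}

theorem map_rename_varIdeal_le (j : V) :
    (varIdeal (K := K) α j).map (rename Sigma.fst) ≤ Ideal.span {X j} := by
  rw [varIdeal, Ideal.map_span, Ideal.span_le]
  rintro _ ⟨_, ⟨r, rfl⟩, rfl⟩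
  simp

theorem X_mem_varIdeal (a : Σ j, Fin (α j)) : (X a : MvPolynomial _ K) ∈ varIdeal α a.1 :=
  Ideal.subset_span ⟨a.2, rfl⟩

variable [Fintype V]

theorem map_rename_prod_varIdeal_pow_le (k : V →₀ ℕ) :
    (∏ j, varIdeal (K := K) α j ^ k j).map (rename Sigma.fst) ≤ Ideal.span {monomial k 1} :=
  calc (∏ j, varIdeal (K := K) α j ^ k j).map (rename Sigma.fst)
      = ∏ j, ((varIdeal α j).map (rename Sigma.fst)) ^ k j := by
        simp only [← Ideal.mapHom_apply, map_prod, map_pow]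
    _ ≤ ∏ j, Ideal.span {X j} ^ k j :=
        Finset.prod_le_prod' fun j _ => pow_le_pow_left' (map_rename_varIdeal_le j) _
    _ = Ideal.span {monomial k 1} := by
        simp only [Ideal.span_singleton_pow, Ideal.prod_span_singleton]
        rw [monomial_eq, C_1, one_mul, Finsupp.prod_fintype _ _ fun _ => pow_zero _]

theorem monomial_mem_prod_varIdeal_pow_mapDomain (s : (Σ j, Fin (α j)) →₀ ℕ) :
    monomial s (1 : K) ∈ ∏ j, varIdeal α j ^ s.mapDomain Sigma.fst j := by
  rw [← Finsupp.prod_fintype _ _ fun _ => pow_zero _,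
    Finsupp.prod_mapDomain_index (fun _ => pow_zero _) fun _ _ _ => pow_add _ _ _,
    monomial_eq, C_1, one_mul]
  exact Ideal.prod_mem_prod fun a _ => Ideal.pow_mem_pow (X_mem_varIdeal a) _

theorem monomial_mem_prod_varIdeal_pow_of_le {k : V →₀ ℕ} {b : (Σ j, Fin (α j)) →₀ ℕ}
    (h : k ≤ b.mapDomain Sigma.fst) : monomial b (1 : K) ∈ ∏ j, varIdeal α j ^ k j :=
  Finset.prod_le_prod' (fun j _ => Ideal.pow_le_pow_right (h j))
    (monomial_mem_prod_varIdeal_pow_mapDomain b)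

theorem monomial_mem_iSup_prod_varIdeal_pow_iff (S : Set (V →₀ ℕ))
    (b : (Σ j, Fin (α j)) →₀ ℕ) :
    monomial b (1 : K) ∈ ⨆ m ∈ S, ∏ j, varIdeal α j ^ m j ↔
      ∃ m ∈ S, m ≤ b.mapDomain Sigma.fst := by
  constructor
  · intro hb
    have hle : (⨆ m ∈ S, ∏ j, varIdeal α j ^ m j) ≤
        (Ideal.span ((monomial · (1 : K)) '' S)).comap (rename Sigma.fst) :=
      iSup₂_le fun m hm => Ideal.map_le_iff_le_comap.1 <|
        (map_rename_prod_varIdeal_pow_le m).trans (Ideal.span_mono (by simpa using hm))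
    have := hle hb
    rw [Ideal.mem_comap, rename_monomial, mem_ideal_span_monomial_image] at this
    exact this _ (by classical simp)
  · rintro ⟨m, hm, hmb⟩
    exact Ideal.mem_iSup_of_mem m <|
      Ideal.mem_iSup_of_mem hm (monomial_mem_prod_varIdeal_pow_of_le hmb)

theorem monomial_mem_expandIdeal_iff (I : Ideal (MvPolynomial V K))
    (b : (Σ j, Fin (α j)) →₀ ℕ) :
    monomial b (1 : K) ∈ expandIdeal α I ↔ ∃ m ∈ minGens I, m ≤ b.mapDomain Sigma.fst :=
  monomial_mem_iSup_prod_varIdeal_pow_iff _ b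

theorem mem_minGens_expandIdeal_iff (I : Ideal (MvPolynomial V K))
    (b : (Σ j, Fin (α j)) →₀ ℕ) :
    b ∈ minGens (expandIdeal α I) ↔ b.mapDomain Sigma.fst ∈ minGens I := by
  simp only [minGens, Set.mem_ofPred_eq, monomial_mem_expandIdeal_iff]
  constructor
  · rintro ⟨⟨m, hm, hmb⟩, hb_min⟩
    obtain ⟨s, hsb, rfl⟩ := Finsupp.exists_le_mapDomain_eq_of_le_mapDomain hmb
    rwa [hb_min s ⟨_, hm, le_rfl⟩ hsb] at hm
  · rintro ⟨hb, hb_min⟩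
    refine ⟨⟨_, ⟨hb, hb_min⟩, le_rfl⟩, fun b' ⟨m, ⟨hm, _⟩, hmb'⟩ hb'b => ?_⟩
    have hDb'b := Finsupp.mapDomain_mono (f := Sigma.fst) hb'b
    have hmDb := hb_min m hm (hmb'.trans hDb'b)
    exact Finsupp.eq_of_le_of_mapDomain_eq hb'b (le_antisymm hDb'b (hmDb ▸ hmb'))

end Expansion

theorem minGens_expandIdeal_general {K : Type*} [Field K] {n : ℕ} (α : Fin n → ℕ)
    (I : Ideal (MvPolynomial (Fin n) K)) :
    minGens (expandIdeal α I) =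
      ⋃ m ∈ minGens I,
        minGens (expandIdeal α (Ideal.span {MvPolynomial.monomial m (1 : K)})) := by
  ext b
  simp only [Set.mem_iUnion, mem_minGens_expandIdeal_iff, minGens_span_monomial,
    Set.mem_singleton_iff, exists_prop, exists_eq_right']

/-- `G(I^α) = G(I)^α` for a monomial ideal `I`. -/
theorem minGens_expandIdeal {K : Type*} [Field K] {n : ℕ} (α : Fin n → ℕ)
    (hα : ∀ i, 1 ≤ α i) (I : Ideal (MvPolynomial (Fin n) K)) (hI : IsMonomialIdeal I) :
    minGens (expandIdeal α I) =
      ⋃ m ∈ minGens I,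
        minGens (expandIdeal α (Ideal.span {MvPolynomial.monomial m (1 : K)})) :=
  minGens_expandIdeal_general α I
end
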